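/- arXiv:1612.03736 — 2 statements merged into one kernel-verified Lean document; each statement's English description precedes it below -/
import Mathlib

section
/- Let H be a connected finite simple graph and let G = H ∘ K₂ be the corona of H with K₂, with α = α(G). If α ≥ 3, then s_{α−3}·s_{α−1} ≤ s_{α−2}² and s_{α−2}·s_α ≤ s_{α−1}². -/
/-!
In `H ∘ K₂` an independent set meets each triangle `{v, (v, false), (v, true)}` at most once, so
`α = n := |V(H)|`, and an independent `k`-set extends by one vertex in at least `2 (n - k)` ways
(the two leaves of each untouched triangle) and at most `3 (n - k)` ways. Double counting the
pairs `S ⊆ T` of independent sets of sizes `k` and `k + 1` gives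
`2 (n - k) s_k ≤ (k + 1) s_{k+1} ≤ 3 (n - k) s_k`. For `n - k ∈ {2, 3}` the lower bound on
`s_{k+1} / s_k` dominates the upper bound on `s_{k+2} / s_{k+1}`, which is log-concavity at `k + 1`.
-/

open Finset
open scoped Classical

variable {V : Type*}

/-- `S` is an independent set in `G`: its vertices are pairwise non-adjacent. -/
def IsIndepSet (G : SimpleGraph V) (S : Finset V) : Prop :=
  ∀ ⦃u⦄, u ∈ S → ∀ ⦃v⦄, v ∈ S → ¬ G.Adj u v

/-- The neighborhood `N(S)`: all vertices having at least one neighbor in `S`. -/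
noncomputable def neigh [Fintype V] (G : SimpleGraph V) (S : Finset V) : Finset V :=
  Finset.univ.filter fun v => ∃ u ∈ S, G.Adj u v

/-- The independence number `α(G)`: the maximum size of an independent set. -/
noncomputable def indepNum [Fintype V] (G : SimpleGraph V) : ℕ :=
  (Finset.univ.filter fun S : Finset V => IsIndepSet G S).sup Finset.card

/-- `s_k`: the number of independent sets of size `k` in `G`. -/
noncomputable def indepCount [Fintype V] (G : SimpleGraph V) (k : ℕ) : ℕ :=
  (Finset.univ.filter fun S : Finset V => IsIndepSet G S ∧ S.card = k).card

/-- A maximal independent set (not properly contained in another independent set). -/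
def IsMaximalIndepSet (G : SimpleGraph V) (S : Finset V) : Prop :=
  IsIndepSet G S ∧ ∀ T : Finset V, IsIndepSet G T → S ⊆ T → S = T

/-- `G` is well-covered: all maximal independent sets have the same cardinality. -/
def IsWellCovered (G : SimpleGraph V) : Prop :=
  ∀ S T : Finset V, IsMaximalIndepSet G S → IsMaximalIndepSet G T → S.card = T.card

/-- `G` is 1-well-covered: it is well-covered, has at least two vertices, and
deleting any vertex leaves a well-covered graph. -/
def IsOneWellCovered [Fintype V] (G : SimpleGraph V) : Prop :=
  IsWellCovered G ∧ 2 ≤ Fintype.card V ∧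
    ∀ v : V, IsWellCovered (G.induce ({v}ᶜ : Set V))

/-- The corona `H ∘ K₂`: for each vertex `v` of `H`, two new vertices
(`(v, false)` and `(v, true)`) adjacent to each other and to `v` are added. -/
def corona2 (H : SimpleGraph V) : SimpleGraph (V ⊕ V × Bool) :=
  SimpleGraph.fromRel fun x y =>
    match x, y with
    | Sum.inl u, Sum.inl v => H.Adj u v
    | Sum.inl u, Sum.inr (v, _) => u = v
    | Sum.inr (u, _), Sum.inr (v, _) => u = v
    | _, _ => False

theorem IsIndepSet.mono {W : Type*} {G : SimpleGraph W} {S T : Finset W}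
    (hT : IsIndepSet G T) (hST : S ⊆ T) : IsIndepSet G S :=
  fun _ hu _ hv => hT (hST hu) (hST hv)

section LevelCounting

variable {W : Type*} [Fintype W] (G : SimpleGraph W)

noncomputable def indepSetsOfCard (k : ℕ) : Finset (Finset W) :=
  Finset.univ.filter fun S : Finset W => IsIndepSet G S ∧ S.card = k

variable {G}

theorem mem_indepSetsOfCard {k : ℕ} {S : Finset W} :
    S ∈ indepSetsOfCard G k ↔ IsIndepSet G S ∧ S.card = k := by
  simp [indepSetsOfCard]

theorem card_indepSetsOfCard (k : ℕ) : #(indepSetsOfCard G k) = indepCount G k := rfl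

variable [DecidableEq W]

variable (G) in
noncomputable def indepExtensions (S : Finset W) : Finset W :=
  Finset.univ.filter fun x => x ∉ S ∧ IsIndepSet G (insert x S)

theorem card_bipartiteBelow_indepSetsOfCard {k : ℕ} {T : Finset W}
    (hT : T ∈ indepSetsOfCard G (k + 1)) :
    #((indepSetsOfCard G k).bipartiteBelow (· ⊆ ·) T) = k + 1 := by
  rw [mem_indepSetsOfCard] at hT
  have : (indepSetsOfCard G k).bipartiteBelow (· ⊆ ·) T = T.powersetCard k := by
    ext S
    simp only [mem_bipartiteBelow, mem_indepSetsOfCard, mem_powersetCard]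
    exact ⟨fun ⟨⟨_, hk⟩, hST⟩ => ⟨hST, hk⟩, fun ⟨hST, hk⟩ => ⟨⟨hT.1.mono hST, hk⟩, hST⟩⟩
  rw [this, card_powersetCard, hT.2, Nat.choose_succ_self_right]

theorem card_bipartiteAbove_indepSetsOfCard {k : ℕ} {S : Finset W}
    (hS : S ∈ indepSetsOfCard G k) :
    #((indepSetsOfCard G (k + 1)).bipartiteAbove (· ⊆ ·) S) = #(indepExtensions G S) := by
  rw [mem_indepSetsOfCard] at hS
  symm
  refine card_nbij (insert · S) ?_ ?_ ?_
  · intro x hx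
    simp only [indepExtensions, mem_coe, mem_filter, mem_univ, true_and] at hx
    simp only [mem_coe, mem_bipartiteAbove, mem_indepSetsOfCard]
    exact ⟨⟨hx.2, by rw [card_insert_of_notMem hx.1, hS.2]⟩, subset_insert x S⟩
  · intro x hx y hy hxy
    simp only [indepExtensions, mem_coe, mem_filter, mem_univ, true_and] at hx hy
    exact (insert_inj hx.1).1 hxy
  · intro T hT
    simp only [mem_coe, mem_bipartiteAbove, mem_indepSetsOfCard] at hT
    obtain ⟨x, hxS, rfl⟩ := exists_eq_insert_iff.2 ⟨hT.2, by rw [hS.2, hT.1.2]⟩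
    exact ⟨x, by simpa [indepExtensions] using ⟨hxS, hT.1.1⟩, rfl⟩

theorem indepCount_mul_le_indepCount_succ_mul {k m : ℕ}
    (h : ∀ S, IsIndepSet G S → S.card = k → m ≤ #(indepExtensions G S)) :
    indepCount G k * m ≤ indepCount G (k + 1) * (k + 1) := by
  rw [← card_indepSetsOfCard, ← card_indepSetsOfCard]
  refine card_mul_le_card_mul (· ⊆ ·) (fun S hS => ?_)
    (fun T hT => (card_bipartiteBelow_indepSetsOfCard hT).le)
  rw [card_bipartiteAbove_indepSetsOfCard hS]
  exact h S (mem_indepSetsOfCard.1 hS).1 (mem_indepSetsOfCard.1 hS).2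

theorem indepCount_succ_mul_le_indepCount_mul {k m : ℕ}
    (h : ∀ S, IsIndepSet G S → S.card = k → #(indepExtensions G S) ≤ m) :
    indepCount G (k + 1) * (k + 1) ≤ indepCount G k * m := by
  rw [← card_indepSetsOfCard, ← card_indepSetsOfCard]
  refine card_mul_le_card_mul' (· ⊆ ·)
    (fun T hT => (card_bipartiteBelow_indepSetsOfCard hT).ge) (fun S hS => ?_)
  rw [card_bipartiteAbove_indepSetsOfCard hS]
  exact h S (mem_indepSetsOfCard.1 hS).1 (mem_indepSetsOfCard.1 hS).2

end LevelCounting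

namespace Corona2

def base : V ⊕ V × Bool → V := Sum.elim id Prod.fst

def tag : V ⊕ V × Bool → Option Bool := Sum.elim (fun _ => none) (fun p => some p.2)

theorem eq_of_base_eq_of_tag_eq {x y : V ⊕ V × Bool} (hb : base x = base y)
    (ht : tag x = tag y) : x = y := by
  rcases x with u | ⟨u, b⟩ <;> rcases y with v | ⟨v, c⟩ <;> simp_all [base, tag]

variable (H : SimpleGraph V)

theorem adj_of_base_eq {x y : V ⊕ V × Bool} (hne : x ≠ y) (hb : base x = base y) :
    (corona2 H).Adj x y := by
  refine (SimpleGraph.fromRel_adj _ _ _).2 ⟨hne, ?_⟩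
  rcases x with u | ⟨u, b⟩ <;> rcases y with v | ⟨v, c⟩ <;>
    simp only [base, Sum.elim_inl, Sum.elim_inr, id] at hb
  · exact absurd (congrArg Sum.inl hb) hne
  · exact Or.inl hb
  · exact Or.inr hb.symm
  · exact Or.inl hb

theorem base_eq_of_inr_adj {u : V} {b : Bool} {x : V ⊕ V × Bool}
    (h : (corona2 H).Adj (Sum.inr (u, b)) x) : base x = u := by
  rw [corona2, SimpleGraph.fromRel_adj] at h
  rcases x with v | ⟨v, c⟩ <;> rcases h.2 with h' | h' <;> simp_all [base]

variable {H}

theorem card_image_base {S : Finset (V ⊕ V × Bool)} (hS : IsIndepSet (corona2 H) S) :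
    #(S.image base) = #S :=
  card_image_of_injOn fun _ hx _ hy hxy =>
    by_contra fun hne => hS hx hy (adj_of_base_eq H hne hxy)

variable [Fintype V]

theorem card_le_of_isIndepSet {S : Finset (V ⊕ V × Bool)} (hS : IsIndepSet (corona2 H) S) :
    #S ≤ Fintype.card V :=
  card_image_base hS ▸ card_le_univ _

theorem card_indepExtensions_le {S : Finset (V ⊕ V × Bool)} (hS : IsIndepSet (corona2 H) S) :
    #(indepExtensions (corona2 H) S) ≤ 3 * (Fintype.card V - #S) := by
  have hmaps : ∀ x ∈ indepExtensions (corona2 H) S,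
      (base x, tag x) ∈ (univ \ S.image base) ×ˢ (univ : Finset (Option Bool)) := by
    intro x hx
    simp only [indepExtensions, mem_filter, mem_univ, true_and] at hx
    simp only [mem_product, mem_sdiff, mem_univ, true_and, and_true, mem_image, not_exists,
      not_and]
    intro s hs hsx
    exact hx.2 (mem_insert_self x S) (mem_insert_of_mem hs)
      (adj_of_base_eq H (by rintro rfl; exact hx.1 hs) hsx.symm)
  calc #(indepExtensions (corona2 H) S)
      ≤ #((univ \ S.image base) ×ˢ (univ : Finset (Option Bool))) :=
        card_le_card_of_injOn _ hmaps fun x _ y _ h =>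
          eq_of_base_eq_of_tag_eq (congrArg Prod.fst h) (congrArg Prod.snd h)
    _ = 3 * (Fintype.card V - #S) := by
        rw [card_product, card_univ_sdiff, card_image_base hS, card_univ, Fintype.card_option,
          Fintype.card_bool, mul_comm]

theorem le_card_indepExtensions {S : Finset (V ⊕ V × Bool)} (hS : IsIndepSet (corona2 H) S) :
    2 * (Fintype.card V - #S) ≤ #(indepExtensions (corona2 H) S) := by
  have hmaps : ∀ p ∈ (univ \ S.image base) ×ˢ (univ : Finset Bool),
      (Sum.inr p : V ⊕ V × Bool) ∈ indepExtensions (corona2 H) S := by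
    rintro ⟨v, b⟩ hp
    have hv : ∀ x ∈ S, base x ≠ v := by simpa using hp
    have hnotMem : (Sum.inr (v, b) : V ⊕ V × Bool) ∉ S := fun h => hv _ h rfl
    simp only [indepExtensions, mem_filter, mem_univ, true_and]
    refine ⟨hnotMem, fun x hx y hy hxy => ?_⟩
    rcases mem_insert.1 hx with rfl | hx <;> rcases mem_insert.1 hy with rfl | hy
    · exact hxy.ne rfl
    · exact hv y hy (base_eq_of_inr_adj H hxy)
    · exact hv x hx (base_eq_of_inr_adj H hxy.symm)
    · exact hS hx hy hxy
  calc 2 * (Fintype.card V - #S)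
      = #((univ \ S.image base) ×ˢ (univ : Finset Bool)) := by
        rw [card_product, card_univ_sdiff, card_image_base hS, card_univ, Fintype.card_bool,
          mul_comm]
    _ ≤ #(indepExtensions (corona2 H) S) :=
        card_le_card_of_injOn _ hmaps fun _ _ _ _ h => Sum.inr_injective h

theorem indepNum_eq (H : SimpleGraph V) : indepNum (corona2 H) = Fintype.card V := by
  refine le_antisymm (Finset.sup_le fun S hS => card_le_of_isIndepSet (mem_filter.1 hS).2) ?_
  let leaves : Finset (V ⊕ V × Bool) := univ.image fun v => Sum.inr (v, false)
  have hleaves : IsIndepSet (corona2 H) leaves := by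
    intro x hx y hy hxy
    obtain ⟨u, -, rfl⟩ := mem_image.1 hx
    obtain ⟨v, -, rfl⟩ := mem_image.1 hy
    have : v = u := base_eq_of_inr_adj H hxy
    exact hxy.ne (by rw [this])
  have hcard : #leaves = Fintype.card V :=
    card_image_of_injective _ fun u v h => congrArg Prod.fst (Sum.inr_injective h)
  exact hcard ▸ le_sup (f := Finset.card) (mem_filter.2 ⟨mem_univ _, hleaves⟩)

theorem indepCount_mul_le (H : SimpleGraph V) (k : ℕ) :
    indepCount (corona2 H) k * (2 * (Fintype.card V - k)) ≤
      indepCount (corona2 H) (k + 1) * (k + 1) :=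
  indepCount_mul_le_indepCount_succ_mul fun _ hS hk => hk ▸ le_card_indepExtensions hS

theorem indepCount_succ_mul_le (H : SimpleGraph V) (k : ℕ) :
    indepCount (corona2 H) (k + 1) * (k + 1) ≤
      indepCount (corona2 H) k * (3 * (Fintype.card V - k)) :=
  indepCount_succ_mul_le_indepCount_mul fun _ hS hk => hk ▸ card_indepExtensions_le hS

end Corona2

theorem mul_le_sq_of_mul_le_mul {x y z p q r t : ℕ} (hxy : x * p ≤ y * q) (hyz : z * r ≤ y * t)
    (hpr : 0 < p * r) (hqt : q * t ≤ p * r) : x * z ≤ y ^ 2 := by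
  refine le_of_mul_le_mul_left ?_ hpr
  calc p * r * (x * z) = (x * p) * (z * r) := by ring
    _ ≤ (y * q) * (y * t) := Nat.mul_le_mul hxy hyz
    _ = q * t * y ^ 2 := by ring
    _ ≤ p * r * y ^ 2 := Nat.mul_le_mul_right _ hqt

theorem stmt_15_general {V : Type*} [Fintype V] (H : SimpleGraph V)
    (G : SimpleGraph (V ⊕ V × Bool)) (hG : G = corona2 H)
    (alpha : ℕ) (ha : alpha = indepNum G) (ha3 : 3 ≤ alpha) :
    indepCount G (alpha - 3) * indepCount G (alpha - 1) ≤ indepCount G (alpha - 2) ^ 2 ∧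
    indepCount G (alpha - 2) * indepCount G alpha ≤ indepCount G (alpha - 1) ^ 2 := by
  subst hG
  rw [Corona2.indepNum_eq] at ha
  obtain ⟨k, rfl⟩ : ∃ k, alpha = k + 3 := ⟨alpha - 3, by omega⟩
  have lower₀ := Corona2.indepCount_mul_le H k
  have lower₁ := Corona2.indepCount_mul_le H (k + 1)
  have upper₁ := Corona2.indepCount_succ_mul_le H (k + 1)
  have upper₂ := Corona2.indepCount_succ_mul_le H (k + 2)
  simp only [← ha, Nat.add_sub_cancel, Nat.add_sub_cancel_left, show k + 3 - 2 = k + 1 by omega,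
    show k + 3 - 1 = k + 2 by omega, show k + 3 - (k + 1) = 2 by omega,
    show k + 3 - (k + 2) = 1 by omega] at lower₀ lower₁ upper₁ upper₂ ⊢
  exact ⟨mul_le_sq_of_mul_le_mul lower₀ upper₁ (by positivity) (by omega),
    mul_le_sq_of_mul_le_mul lower₁ upper₂ (by positivity) (by omega)⟩

/-- If `H` is a connected graph and `G = H ∘ K₂` with `α = α(G) ≥ 3`,
then `s_{α−3}·s_{α−1} ≤ s_{α−2}²` and `s_{α−2}·s_α ≤ s_{α−1}²`. -/
theorem stmt_15 {V : Type*} [Fintype V] (H : SimpleGraph V) (hconn : H.Connected)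
    (G : SimpleGraph (V ⊕ V × Bool)) (hG : G = corona2 H)
    (alpha : ℕ) (ha : alpha = indepNum G) (ha3 : 3 ≤ alpha) :
    indepCount G (alpha - 3) * indepCount G (alpha - 1) ≤ indepCount G (alpha - 2) ^ 2 ∧
    indepCount G (alpha - 2) * indepCount G alpha ≤ indepCount G (alpha - 1) ^ 2 :=
  stmt_15_general H G hG alpha ha ha3
end

section
/- Let G be a connected finite simple graph, not isomorphic to K₂, which is 1-well-covered. Then G has at least 2·α(G) + 1 vertices, and |A| < |N(A)| for every nonempty independent set A of G. -/
open Finset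
open scoped Classical

variable {V : Type*}

/-!
Take a vertex `v` and an independent set `B` avoiding its closed neighbourhood `N[v]`, and extend
`B` to a maximal independent set `T` of `G - N[v]`. Then `T + v` is maximal in `G`, so
`|T| = α - 1`. If `T` dominated every neighbour of `v`, it would be a maximal independent set of
`G - v`; but `G - v` is well-covered and contains a maximal independent set of `G` (one through a
neighbour of `v`), so `|T| = α`. Hence some neighbour of `v` has no neighbour in `B`.

With `B = A - v` this gives every vertex of an independent set `A` a private neighbour, so
`|A| ≤ |N(A)|`, and equality forces some `v ∈ A` to be a leaf with support `s`. With `B = {y}`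
for a neighbour `y ≠ v` of `s`, the same fact gives a contradiction, so `{v, s}` is a component
of `G`, i.e. `G ≅ K₂`. For a maximum independent set `S`, the disjoint sets `S` and `N(S)` then
give `n ≥ 2α + 1`.
-/

namespace IsIndepSet

variable {G : SimpleGraph V} {S T : Finset V}

lemma mono_s18 (hT : IsIndepSet G T) (hST : S ⊆ T) : IsIndepSet G S :=
  fun _ hu _ hv => hT (hST hu) (hST hv)

protected lemma insert (hT : IsIndepSet G T) {w : V} (hw : ∀ u ∈ T, ¬ G.Adj u w) :
    IsIndepSet G (insert w T) := by
  intro a ha b hb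
  rw [mem_insert] at ha hb
  rcases ha with rfl | ha
  · rcases hb with rfl | hb
    · exact G.loopless.irrefl _
    · exact fun h => hw b hb h.symm
  · rcases hb with rfl | hb
    · exact hw a ha
    · exact hT ha hb

lemma disjoint_neigh [Fintype V] (hS : IsIndepSet G S) : Disjoint S (neigh G S) := by
  refine disjoint_left.2 fun a ha hn => ?_
  obtain ⟨u, hu, hadj⟩ := (mem_filter.1 hn).2
  exact hS hu ha hadj

end IsIndepSet

lemma isIndepSet_singleton (G : SimpleGraph V) (v : V) : IsIndepSet G {v} := by
  intro a ha b hb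
  rw [mem_singleton] at ha hb
  exact ha ▸ hb ▸ G.loopless.irrefl v

/-- A maximal independent set of `G - F`, viewed as a set of vertices of `G`. -/
def IsMaximalIndepSetOff (G : SimpleGraph V) (F : Set V) (T : Finset V) : Prop :=
  IsIndepSet G T ∧ (∀ t ∈ T, t ∉ F) ∧ ∀ w, w ∉ F → w ∉ T → ∃ u ∈ T, G.Adj u w

section IndepNum

variable {G : SimpleGraph V}

lemma exists_isMaximalIndepSetOff_superset [Fintype V] (F : Set V) {A : Finset V}
    (hA : IsIndepSet G A) (hAF : ∀ a ∈ A, a ∉ F) : ∃ T, A ⊆ T ∧ IsMaximalIndepSetOff G F T := by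
  set C := univ.filter fun T : Finset V => IsIndepSet G T ∧ (∀ t ∈ T, t ∉ F) ∧ A ⊆ T
  obtain ⟨T, hTC, hmax⟩ := C.exists_max_image card ⟨A, by simpa [C, hA] using hAF⟩
  simp only [C, mem_filter, mem_univ, true_and] at hTC hmax
  obtain ⟨hTi, hTF, hAT⟩ := hTC
  refine ⟨T, hAT, hTi, hTF, fun w hwF hwT => ?_⟩
  by_contra! hw
  have hins := hmax (insert w T)
    ⟨hTi.insert hw, by simpa using ⟨hwF, hTF⟩, hAT.trans (subset_insert w T)⟩
  rw [card_insert_of_notMem hwT] at hins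
  omega

lemma IsMaximalIndepSetOff.isMaximalIndepSet {S : Finset V}
    (hS : IsMaximalIndepSetOff G ∅ S) : IsMaximalIndepSet G S := by
  refine ⟨hS.1, fun T hT hST => Subset.antisymm hST fun x hx => ?_⟩
  by_contra hxS
  obtain ⟨u, huS, hadj⟩ := hS.2.2 x (Set.notMem_empty x) hxS
  exact hT (hST huS) hx hadj

lemma card_le_indepNum [Fintype V] {S : Finset V} (hS : IsIndepSet G S) : S.card ≤ indepNum G :=
  le_sup (by simpa using hS)

lemma exists_isMaximalIndepSet_card_eq_indepNum [Fintype V] (G : SimpleGraph V) :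
    ∃ S, IsMaximalIndepSet G S ∧ S.card = indepNum G := by
  obtain ⟨S, hS, hsup⟩ := exists_mem_eq_sup (univ.filter fun S : Finset V => IsIndepSet G S)
    ⟨∅, mem_filter.2 ⟨mem_univ _, by simp [IsIndepSet]⟩⟩ card
  simp only [mem_filter, mem_univ, true_and] at hS
  exact ⟨S, ⟨hS, fun T hT hST => eq_of_subset_of_card_le hST (hsup ▸ card_le_indepNum hT)⟩,
    hsup.symm⟩

lemma IsWellCovered.card_eq_indepNum [Fintype V] (hG : IsWellCovered G) {S : Finset V}
    (hS : IsMaximalIndepSet G S) : S.card = indepNum G := by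
  obtain ⟨S₀, hS₀, hcard⟩ := exists_isMaximalIndepSet_card_eq_indepNum G
  exact hcard ▸ hG S S₀ hS hS₀

end IndepNum

section Off

variable {G : SimpleGraph V} {F : Set V} {S T : Finset V}

lemma IsMaximalIndepSetOff.card_subtype (hS : IsMaximalIndepSetOff G F S) :
    (S.subtype (· ∈ Fᶜ)).card = S.card := by
  rw [Finset.card_subtype, filter_true_of_mem fun x hx => show x ∈ Fᶜ from hS.2.1 x hx]

lemma IsMaximalIndepSetOff.isMaximalIndepSet_induce (hS : IsMaximalIndepSetOff G F S) :
    IsMaximalIndepSet (G.induce Fᶜ) (S.subtype (· ∈ Fᶜ)) := by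
  obtain ⟨hSi, hSF, hSdom⟩ := hS
  refine ⟨fun a ha b hb hadj => hSi (mem_subtype.1 ha) (mem_subtype.1 hb) (by simpa using hadj),
    fun T hT hST => Subset.antisymm hST fun x hx => ?_⟩
  by_contra hxS
  obtain ⟨u, huS, hadj⟩ := hSdom x x.2 fun h => hxS (mem_subtype.2 h)
  have hu : (⟨u, hSF u huS⟩ : (Fᶜ : Set V)) ∈ T := hST (mem_subtype.2 huS)
  exact hT hu hx (by simpa using hadj)

lemma IsWellCovered.card_eq_of_isMaximalIndepSetOff (hF : IsWellCovered (G.induce Fᶜ))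
    (hS : IsMaximalIndepSetOff G F S) (hT : IsMaximalIndepSetOff G F T) : S.card = T.card := by
  rw [← hS.card_subtype, ← hT.card_subtype]
  exact hF _ _ hS.isMaximalIndepSet_induce hT.isMaximalIndepSet_induce

end Off

lemma SimpleGraph.Connected.nonempty_iso_top_of_isolated_edge [Fintype V] {G : SimpleGraph V}
    (hconn : G.Connected) {v s : V} (hv : ∀ w, G.Adj v w ↔ w = s) (hs : ∀ y, G.Adj s y → y = v) :
    Nonempty (G ≃g (⊤ : SimpleGraph (Fin 2))) := by
  have hvs : G.Adj v s := (hv s).2 rfl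
  have hmem : ∀ x, x = v ∨ x = s := by
    intro x
    by_contra! hx
    obtain ⟨d, -, hd, hdx⟩ :=
      (hconn.preconnected v x).some.exists_boundary_dart {v, s} (by simp) (by simpa using hx)
    rcases hd with hd | hd
    · exact hdx (Or.inr ((hv _).1 (hd ▸ d.adj)))
    · exact hdx (Or.inl (hs _ (hd ▸ d.adj)))
  have htop : G = ⊤ := by
    ext x y
    rcases hmem x with rfl | rfl <;> rcases hmem y with rfl | rfl <;>
      simp [hvs, hvs.symm, hvs.ne, hvs.ne.symm]
  have hcard : Fintype.card V = 2 := by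
    rw [← card_univ, show univ = {v, s} by ext x; simpa using hmem x, card_pair hvs.ne]
  subst htop
  exact ⟨Iso.completeGraph (Fintype.equivFinOfCardEq hcard)⟩

namespace IsOneWellCovered

variable [Fintype V] {G : SimpleGraph V}

lemma card_eq_indepNum_of_isMaximalIndepSetOff_singleton (h1wc : IsOneWellCovered G)
    (hconn : G.Connected) (v : V) {S : Finset V} (hS : IsMaximalIndepSetOff G {v} S) :
    S.card = indepNum G := by
  have : Nontrivial V := Fintype.one_lt_card_iff_nontrivial.1 h1wc.2.1
  obtain ⟨u, hvu⟩ := hconn.preconnected.exists_adj_of_nontrivial v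
  obtain ⟨T, huT, hT⟩ := exists_isMaximalIndepSetOff_superset ∅ (isIndepSet_singleton G u)
    fun a _ => Set.notMem_empty a
  have hvT : v ∉ T := fun hvT => hT.1 hvT (huT (mem_singleton_self u)) hvu
  have hTv : IsMaximalIndepSetOff G {v} T :=
    ⟨hT.1, fun t ht htv => hvT (Set.mem_singleton_iff.1 htv ▸ ht),
      fun w _ hwT => hT.2.2 w (Set.notMem_empty w) hwT⟩
  rw [(h1wc.2.2 v).card_eq_of_isMaximalIndepSetOff hS hTv]
  exact h1wc.1.card_eq_indepNum hT.isMaximalIndepSet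

lemma exists_adj_forall_not_adj (h1wc : IsOneWellCovered G) (hconn : G.Connected) {v : V}
    {B : Finset V} (hB : IsIndepSet G B) (hBv : ∀ b ∈ B, b ≠ v ∧ ¬ G.Adj v b) :
    ∃ w, G.Adj v w ∧ ∀ b ∈ B, ¬ G.Adj b w := by
  obtain ⟨T, hBT, hTi, hTN, hTdom⟩ :=
    exists_isMaximalIndepSetOff_superset {w | w = v ∨ G.Adj v w} hB
      fun b hb hbN => hbN.elim (hBv b hb).1 (hBv b hb).2
  have hvT : v ∉ T := fun h => hTN v h (Or.inl rfl)
  have hcard_insert : T.card + 1 = indepNum G := by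
    have hmax : IsMaximalIndepSetOff G ∅ (insert v T) := by
      refine ⟨hTi.insert fun u hu huv => hTN u hu (Or.inr huv.symm),
        fun t _ => Set.notMem_empty t, fun w _ hw => ?_⟩
      by_cases hvw : G.Adj v w
      · exact ⟨v, mem_insert_self v T, hvw⟩
      · obtain ⟨u, hu, huw⟩ := hTdom w
          (by rintro (rfl | h); exacts [hw (mem_insert_self _ T), hvw h])
          fun h => hw (mem_insert_of_mem h)
        exact ⟨u, mem_insert_of_mem hu, huw⟩
    rw [← card_insert_of_notMem hvT]
    exact h1wc.1.card_eq_indepNum hmax.isMaximalIndepSet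
  by_contra! hdom
  have hT : IsMaximalIndepSetOff G {v} T := by
    refine ⟨hTi, fun t ht htv => hTN t ht (Or.inl htv), fun w hwv hwT => ?_⟩
    by_cases hvw : G.Adj v w
    · obtain ⟨b, hb, hbw⟩ := hdom w hvw
      exact ⟨b, hBT hb, hbw⟩
    · exact hTdom w (by rintro (h | h); exacts [hwv h, hvw h]) hwT
  have := h1wc.card_eq_indepNum_of_isMaximalIndepSetOff_singleton hconn v hT
  omega

lemma exists_private_neighbor (h1wc : IsOneWellCovered G) (hconn : G.Connected)
    {A : Finset V} (hA : IsIndepSet G A) {v : V} (hv : v ∈ A) :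
    ∃ w, G.Adj v w ∧ ∀ a ∈ A, a ≠ v → ¬ G.Adj a w := by
  obtain ⟨w, hvw, hw⟩ := h1wc.exists_adj_forall_not_adj hconn (hA.mono_s18 (erase_subset v A))
    fun b hb => ⟨ne_of_mem_erase hb, hA hv (mem_of_mem_erase hb)⟩
  exact ⟨w, hvw, fun a ha hav => hw a (mem_erase.2 ⟨hav, ha⟩)⟩

lemma eq_of_adj_of_forall_adj_iff (h1wc : IsOneWellCovered G) (hconn : G.Connected)
    {v s y : V} (hv : ∀ w, G.Adj v w ↔ w = s) (hsy : G.Adj s y) : y = v := by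
  by_contra hyv
  obtain ⟨w, hvw, hw⟩ := h1wc.exists_adj_forall_not_adj hconn (isIndepSet_singleton G y)
    (by simpa using ⟨hyv, fun hvy => hsy.ne ((hv y).1 hvy).symm⟩)
  exact hw y (mem_singleton_self y) ((hv w).1 hvw ▸ hsy.symm)

end IsOneWellCovered

lemma exists_forall_adj_iff_of_card_neigh_le [Fintype V] {G : SimpleGraph V} {A : Finset V}
    (hA : A.Nonempty) (hpriv : ∀ v ∈ A, ∃ w, G.Adj v w ∧ ∀ a ∈ A, a ≠ v → ¬ G.Adj a w)
    (hcard : (neigh G A).card ≤ A.card) : ∃ v s, ∀ w, G.Adj v w ↔ w = s := by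
  choose! f hfadj hfpriv using hpriv
  have hinj : Set.InjOn f A := fun a ha b hb hab =>
    by_contra fun hne => hfpriv b hb a ha hne (hab ▸ hfadj a ha)
  have hf_mem : ∀ a ∈ A, f a ∈ neigh G A := fun a ha =>
    mem_filter.2 ⟨mem_univ _, a, ha, hfadj a ha⟩
  have himage : A.image f = neigh G A :=
    eq_of_subset_of_card_le (image_subset_iff.2 hf_mem) (card_image_of_injOn hinj ▸ hcard)
  obtain ⟨v, hv⟩ := hA
  refine ⟨v, f v, fun w => ⟨fun hvw => ?_, fun h => h ▸ hfadj v hv⟩⟩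
  have hw : w ∈ A.image f := himage ▸ mem_filter.2 ⟨mem_univ w, v, hv, hvw⟩
  obtain ⟨u, hu, rfl⟩ := mem_image.1 hw
  by_contra huv
  exact hfpriv u hu v hv (fun h => huv (h ▸ rfl)) hvw

lemma IsOneWellCovered.card_lt_card_neigh [Fintype V] {G : SimpleGraph V}
    (h1wc : IsOneWellCovered G) (hconn : G.Connected)
    (hK2 : ¬ Nonempty (G ≃g (⊤ : SimpleGraph (Fin 2)))) {A : Finset V} (hA : A.Nonempty)
    (hAi : IsIndepSet G A) : A.card < (neigh G A).card := by
  by_contra! hcard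
  obtain ⟨v, s, hv⟩ := exists_forall_adj_iff_of_card_neigh_le hA
    (fun v hv => h1wc.exists_private_neighbor hconn hAi hv) hcard
  exact hK2 (hconn.nonempty_iso_top_of_isolated_edge hv
    fun y hsy => h1wc.eq_of_adj_of_forall_adj_iff hconn hv hsy)

/-- If `G` is a connected `1`-well-covered graph not isomorphic to `K₂`,
then `G` has at least `2α(G) + 1` vertices and `|A| < |N(A)|` holds for every
nonempty independent set `A`. -/
theorem stmt_18 {V : Type*} [Fintype V] (G : SimpleGraph V)
    (hconn : G.Connected) (hK2 : ¬ Nonempty (G ≃g (⊤ : SimpleGraph (Fin 2))))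
    (h1wc : IsOneWellCovered G) :
    2 * indepNum G + 1 ≤ Fintype.card V ∧
    ∀ A : Finset V, A.Nonempty → IsIndepSet G A → A.card < (neigh G A).card := by
  have hlt : ∀ A : Finset V, A.Nonempty → IsIndepSet G A → A.card < (neigh G A).card :=
    fun _ hA hAi => h1wc.card_lt_card_neigh hconn hK2 hA hAi
  refine ⟨?_, hlt⟩
  obtain ⟨S, hS, hScard⟩ := exists_isMaximalIndepSet_card_eq_indepNum G
  obtain ⟨v⟩ : Nonempty V := Fintype.card_pos_iff.1 (by have := h1wc.2.1; omega)
  have hSne : S.Nonempty := by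
    rw [← card_pos, hScard]
    exact card_le_indepNum (isIndepSet_singleton G v)
  calc 2 * indepNum G + 1 ≤ S.card + (neigh G S).card := by have := hlt S hSne hS.1; omega
    _ = (S ∪ neigh G S).card := (card_union_of_disjoint hS.1.disjoint_neigh).symm
    _ ≤ Fintype.card V := card_le_univ _
end
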